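/- Let T be a rigid object in C, let f : X → Y be a map in C, and let Σ⁻¹Z →h X →f Y →g Z and Σ⁻¹Z' →h' X →f Y →g' Z' be two completions of f to triangles in C. Then g factors through an object of ΣT^⊥ if and only if g' does, and h factors through an object of ΣT^⊥ if and only if h' does. In particular the class S̃ of maps is well-defined. -/

import Mathlib

/-!
Common setup: `C` is a Hom-finite, Krull-Schmidt (= idempotent complete, given
Hom-finiteness over a field), `k`-linear triangulated category with suspension
functor `Σ = shiftFunctor C (1 : ℤ)`, and `T` is a rigid object of `C`.
-/

noncomputable section

open CategoryTheory CategoryTheory.Limits CategoryTheory.Pretriangulated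

universe v u

namespace PaperBM

variable {C : Type u} [Category.{v} C] [Preadditive C] [HasZeroObject C]
  [HasShift C ℤ] [∀ n : ℤ, (shiftFunctor C n).Additive] [Pretriangulated C]
  [HasFiniteBiproducts C]

/-- `X` lies in `add T`: it is a direct summand of a finite direct sum of copies of `T`. -/
def memAdd (T X : C) : Prop :=
  ∃ (n : ℕ) (s : X ⟶ ⨁ (fun _ : Fin n => T)) (r : (⨁ fun _ : Fin n => T) ⟶ X), s ≫ r = 𝟙 X

/-- `T` is rigid: `Hom_C(T, ΣT) = 0`. -/
def IsRigidObj (T : C) : Prop := ∀ f : T ⟶ (shiftFunctor C (1 : ℤ)).obj T, f = 0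

/-- `Y ∈ T^⊥`, i.e. `Hom_C(X, ΣY) = 0` for all `X ∈ add T`. -/
def memTperp (T Y : C) : Prop :=
  ∀ (X : C), memAdd T X → ∀ f : X ⟶ (shiftFunctor C (1 : ℤ)).obj Y, f = 0

/-- `Y ∈ ⊥T`, i.e. `Hom_C(Y, ΣX) = 0` for all `X ∈ add T`. -/
def memPerpT (T Y : C) : Prop :=
  ∀ (X : C), memAdd T X → ∀ f : Y ⟶ (shiftFunctor C (1 : ℤ)).obj X, f = 0

/-- `Y ∈ ΣT^⊥`, the image of `T^⊥` under the suspension `Σ`. -/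
def memSigmaTperp (T Y : C) : Prop :=
  ∃ Z : C, memTperp T Z ∧ Nonempty (Y ≅ (shiftFunctor C (1 : ℤ)).obj Z)

/-- The map `f` factors through an object belonging to the class `P` of objects. -/
def FactorsThru (P : C → Prop) {A B : C} (f : A ⟶ B) : Prop :=
  ∃ (Z : C) (g : A ⟶ Z) (h : Z ⟶ B), P Z ∧ g ≫ h = f

/-- The class `S̃` of maps `f : X ⟶ Y` such that in a completion
`Σ⁻¹Z →h X →f Y →g Z` of `f` to a triangle (where `A` plays the role of `Σ⁻¹Z`,
so that `Z = ΣA`), both `g` and `h` factor through an object of `ΣT^⊥`. -/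
def Stilde (T : C) : MorphismProperty C := fun X Y f =>
  ∃ (A : C) (h : A ⟶ X) (g : Y ⟶ (shiftFunctor C (1 : ℤ)).obj A),
    (Triangle.mk h f g ∈ distTriang C) ∧
    FactorsThru (memSigmaTperp T) g ∧ FactorsThru (memSigmaTperp T) h

/-- The class `S` of maps `f : X ⟶ Y` such that in a completion
`Σ⁻¹Z →h X →f Y →g Z` of `f` to a triangle (where `A` plays the role of `Σ⁻¹Z`,
so that `Z = ΣA`), `g` factors through an object of `ΣT^⊥` and `Σ⁻¹Z ∈ ΣT^⊥`. -/
def Sclass (T : C) : MorphismProperty C := fun X Y f =>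
  ∃ (A : C) (h : A ⟶ X) (g : Y ⟶ (shiftFunctor C (1 : ℤ)).obj A),
    (Triangle.mk h f g ∈ distTriang C) ∧
    FactorsThru (memSigmaTperp T) g ∧ memSigmaTperp T A

/-- `X ∈ C(T)`: there is a triangle `T₁ → T₀ → X → ΣT₁` with `T₀, T₁ ∈ add T`. -/
def memCT (T X : C) : Prop :=
  ∃ (T₁ T₀ : C) (a : T₁ ⟶ T₀) (b : T₀ ⟶ X) (c : X ⟶ (shiftFunctor C (1 : ℤ)).obj T₁),
    memAdd T T₁ ∧ memAdd T T₀ ∧ (Triangle.mk a b c ∈ distTriang C)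

/-- `f : X₀ ⟶ Y` is a right `P`-approximation of `Y`. -/
def IsRightApprox (P : C → Prop) {X₀ Y : C} (f : X₀ ⟶ Y) : Prop :=
  P X₀ ∧ ∀ (W : C), P W → ∀ g : W ⟶ Y, ∃ g' : W ⟶ X₀, g' ≫ f = g

/-- `f : Y ⟶ X₀` is a left `P`-approximation of `Y`. -/
def IsLeftApprox (P : C → Prop) {Y X₀ : C} (f : Y ⟶ X₀) : Prop :=
  P X₀ ∧ ∀ (W : C), P W → ∀ g : Y ⟶ W, ∃ g' : X₀ ⟶ W, f ≫ g' = g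

/-- The map `f : X₀ ⟶ Y` is right minimal. -/
def IsRightMinimal {X₀ Y : C} (f : X₀ ⟶ Y) : Prop :=
  ∀ g : X₀ ⟶ X₀, g ≫ f = f → IsIso g

/-- The functor `H = Hom_C(T, -) : C ⥤ Mod End_C(T)ᵒᵖ`.  Here, with Mathlib's
conventions, the endomorphism ring `End (Opposite.op T)` of `T` viewed in `Cᵒᵖ` plays
the role of `End_C(T)ᵒᵖ`, so that each `Hom_C(T, X)` is a left module over it. -/
instance moduleEndLeftOp {T Y : C} : Module (End (Opposite.op T)) (T ⟶ Y) where
  smul r f := r.unop ≫ f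
  smul_zero _ := comp_zero
  smul_add _ _ _ := Preadditive.comp_add _ _ _ _ _ _
  add_smul _ _ _ := Preadditive.add_comp _ _ _ _ _ _
  zero_smul _ := zero_comp
  one_smul _ := Category.id_comp _
  mul_smul _ _ _ := Category.assoc _ _ _

abbrev homFunctor (T : C) : C ⥤ ModuleCat.{v} (End (Opposite.op T)) where
  obj Y := ModuleCat.of _ (T ⟶ Y)
  map f := ModuleCat.ofHom
    { toFun := fun g => g ≫ f
      map_add' := fun _ _ => Preadditive.add_comp _ _ _ _ _ _
      map_smul' := fun _ _ => Category.assoc _ _ _ }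

/-- The predicate on `End_C(T)ᵒᵖ`-modules of being finite-dimensional (equivalently,
since `End_C(T)` is a finite-dimensional algebra, finitely generated). -/
abbrev isFinDim (T : C) : ModuleCat.{v} (End (Opposite.op T)) → Prop :=
  fun M => Module.Finite (End (Opposite.op T)) M

/-- The category `mod End_C(T)ᵒᵖ` of finite-dimensional `End_C(T)ᵒᵖ`-modules. -/
abbrev fdMod (T : C) := ObjectProperty.FullSubcategory (isFinDim T)

/-- The ideal relation on `C(T)` of maps factoring through an object of `ΣT^⊥`. -/
def homRelCT (T : C) : HomRel (ObjectProperty.FullSubcategory (memCT T)) :=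
  fun A B f g => FactorsThru (memSigmaTperp T) ((f.hom - g.hom : A.obj ⟶ B.obj))

/-- The ideal relation on `C(T)` of maps factoring through an object of `add ΣT`. -/
def homRelCTadd (T : C) : HomRel (ObjectProperty.FullSubcategory (memCT T)) :=
  fun A B f g => FactorsThru (memAdd ((shiftFunctor C (1 : ℤ)).obj T)) ((f.hom - g.hom : A.obj ⟶ B.obj))

/-- The ideal relation on `C` of maps factoring through an object of `add ΣT`. -/
def homRelAdd (T : C) : HomRel C :=
  fun A B f g => FactorsThru (memAdd ((shiftFunctor C (1 : ℤ)).obj T)) (f - g)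

end PaperBM

open PaperBM

/-!
By the axiom TR3, the identities of `X` and `Y` extend to morphisms between the two
completions of `f` in both directions; such a morphism `a : A ⟶ A'` satisfies `h = a ≫ h'`
and `g' = g ≫ Σa`. Maps factoring through a class of objects form an ideal, so each
factorization transfers along these equations.
-/

namespace PaperBM

variable {C : Type u} [Category.{v} C]

lemma FactorsThru.postcomp {P : C → Prop} {A B B' : C} {f : A ⟶ B}
    (hf : FactorsThru P f) (u : B ⟶ B') : FactorsThru P (f ≫ u) := by
  obtain ⟨Z, a, b, hZ, rfl⟩ := hf
  exact ⟨Z, a, b ≫ u, hZ, (Category.assoc _ _ _).symm⟩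

lemma FactorsThru.precomp {P : C → Prop} {A A' B : C} {f : A ⟶ B}
    (u : A' ⟶ A) (hf : FactorsThru P f) : FactorsThru P (u ≫ f) := by
  obtain ⟨Z, a, b, hZ, rfl⟩ := hf
  exact ⟨Z, u ≫ a, b, hZ, Category.assoc _ _ _⟩

variable [Preadditive C] [HasZeroObject C] [HasShift C ℤ]
  [∀ n : ℤ, (shiftFunctor C n).Additive] [Pretriangulated C]

lemma exists_map_of_distTriang_mk {X Y : C} {f : X ⟶ Y}
    {A : C} {h : A ⟶ X} {g : Y ⟶ A⟦(1 : ℤ)⟧} (htri : Triangle.mk h f g ∈ distTriang C)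
    {A' : C} {h' : A' ⟶ X} {g' : Y ⟶ A'⟦(1 : ℤ)⟧} (htri' : Triangle.mk h' f g' ∈ distTriang C) :
    ∃ a : A ⟶ A', h = a ≫ h' ∧ g' = g ≫ a⟦(1 : ℤ)⟧' := by
  obtain ⟨a, ha₁, ha₃⟩ := complete_distinguished_triangle_morphism₁ _ _ htri htri'
    (𝟙 X) (𝟙 Y) ((Category.comp_id f).trans (Category.id_comp f).symm)
  exact ⟨a, (Category.comp_id h).symm.trans ha₁, (Category.id_comp g').symm.trans ha₃.symm⟩

end PaperBM

/-- The class `S̃` is well-defined: for two completions `Σ⁻¹Z →h X →f Y →g Z` and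
`Σ⁻¹Z' →h' X →f Y →g' Z'` of `f` to triangles (where `A`, `A'` play the roles of
`Σ⁻¹Z`, `Σ⁻¹Z'`), `g` factors through an object of `ΣT^⊥` iff `g'` does, and
`h` factors through an object of `ΣT^⊥` iff `h'` does. -/
theorem statement_5 {C : Type u} [Category.{v} C] [Preadditive C] [HasZeroObject C]
    [HasShift C ℤ] [∀ n : ℤ, (shiftFunctor C n).Additive] [Pretriangulated C]
    [HasFiniteBiproducts C]
    {k : Type*} [Field k] [CategoryTheory.Linear k C]
    [∀ X Y : C, FiniteDimensional k (X ⟶ Y)] [IsIdempotentComplete C]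
    (T : C) (hT : IsRigidObj T) {X Y : C} (f : X ⟶ Y)
    (A : C) (h : A ⟶ X) (g : Y ⟶ (shiftFunctor C (1 : ℤ)).obj A)
    (htri : Triangle.mk h f g ∈ distTriang C)
    (A' : C) (h' : A' ⟶ X) (g' : Y ⟶ (shiftFunctor C (1 : ℤ)).obj A')
    (htri' : Triangle.mk h' f g' ∈ distTriang C) :
    (FactorsThru (memSigmaTperp T) g ↔ FactorsThru (memSigmaTperp T) g') ∧
    (FactorsThru (memSigmaTperp T) h ↔ FactorsThru (memSigmaTperp T) h') := by
  obtain ⟨a, rfl, rfl⟩ := exists_map_of_distTriang_mk htri htri'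
  obtain ⟨a', h'_eq, g_eq⟩ := exists_map_of_distTriang_mk htri' htri
  refine ⟨⟨fun hg => hg.postcomp _, fun hg' => ?_⟩, ⟨fun hh => ?_, fun hh' => hh'.precomp a⟩⟩
  · rw [g_eq]
    exact hg'.postcomp _
  · rw [h'_eq]
    exact hh.precomp a'
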